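/- The quotient of the braid group B₃ = ⟨x, y | x·y·x = y·x·y⟩ by the additional relation (x·y)³ = 1 is isomorphic to PSL(2,ℤ), the quotient of SL(2,ℤ) by its center; moreover there is such an isomorphism carrying the class of x to the class of A and the class of y to the class of B⁻¹. Equivalently, the presented group on two generators x, y with relators x·y·x·(y·x·y)⁻¹ and (x·y)³ is isomorphic to SL(2,ℤ) ⧸ center via x ↦ [A], y ↦ [B⁻¹]. -/

import Mathlib

open Matrix MatrixGroups

def A : SL(2,ℤ) := ⟨!![1,1;0,1], by norm_num [Matrix.det_fin_two_of]⟩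
def B : SL(2,ℤ) := ⟨!![1,0;1,1], by norm_num [Matrix.det_fin_two_of]⟩

/-- The relators x·y·x·(y·x·y)⁻¹ and (x·y)³ on two generators x, y. -/
def modularRels : Set (FreeGroup (Fin 2)) :=
  {FreeGroup.of 0 * FreeGroup.of 1 * FreeGroup.of 0 *
    (FreeGroup.of 1 * FreeGroup.of 0 * FreeGroup.of 1)⁻¹,
   (FreeGroup.of 0 * FreeGroup.of 1) ^ 3}

lemma Binv : B⁻¹ = ⟨!![1,0;-1,1], by norm_num [Matrix.det_fin_two_of]⟩ := by
  ext i j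
  fin_cases i <;> fin_cases j <;>
    simp [Matrix.SpecialLinearGroup.coe_inv, Matrix.adjugate_fin_two] <;> simp [B]

def U : SL(2,ℤ) := ⟨!![0,1;-1,1], by norm_num [Matrix.det_fin_two_of]⟩
def S' : SL(2,ℤ) := ⟨!![0,1;-1,0], by norm_num [Matrix.det_fin_two_of]⟩

lemma hU : A * B⁻¹ = U := by
  ext i j
  rw [Binv]
  fin_cases i <;> fin_cases j <;>
    erw [Matrix.SpecialLinearGroup.coe_mul] <;> simp [A, U, Matrix.mul_fin_two]

lemma hS' : A * B⁻¹ * A = S' := by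
  rw [hU]
  ext i j
  fin_cases i <;> fin_cases j <;>
    simp [Matrix.SpecialLinearGroup.coe_mul] <;> simp [A, U, S', Matrix.mul_fin_two]

lemma braid_rel : A * B⁻¹ * A = B⁻¹ * A * B⁻¹ := by
  rw [hS', Binv]
  ext i j
  fin_cases i <;> fin_cases j <;>
    erw [Matrix.SpecialLinearGroup.coe_mul, Matrix.SpecialLinearGroup.coe_mul] <;> simp [A, S', Matrix.mul_fin_two]

lemma hU3 : U ^ 3 = -1 := by
  ext i j
  fin_cases i <;> fin_cases j <;>
    simp [pow_succ, Matrix.SpecialLinearGroup.coe_mul] <;> simp [U, Matrix.mul_fin_two]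

noncomputable def mob (g : SL(2,ℤ)) (x : ℝ) : ℝ :=
  ((g 0 0 : ℝ) * x + (g 0 1)) / ((g 1 0 : ℝ) * x + (g 1 1))

lemma det_entries (g : SL(2,ℤ)) : g 0 0 * g 1 1 - g 0 1 * g 1 0 = 1 := by
  have := g.2
  rwa [Matrix.det_fin_two] at this

lemma denom_ne_zero (g : SL(2,ℤ)) {x : ℝ} (hx : Irrational x) :
    (g 1 0 : ℝ) * x + (g 1 1) ≠ 0 := by
  rcases eq_or_ne (g 1 0) 0 with h | h
  · have hd : g 1 1 ≠ 0 := by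
      intro hd
      have := det_entries g
      rw [h, hd] at this
      simp at this
    simp only [h, Int.cast_zero, zero_mul, zero_add]
    exact_mod_cast hd
  · intro hc
    have hx' : x = ((-(g 1 1 : ℚ) / (g 1 0 : ℚ) : ℚ) : ℝ) := by
      have h' : (g 1 0 : ℝ) ≠ 0 := by exact_mod_cast h
      push_cast
      field_simp
      linarith
    exact hx ⟨_, hx'.symm⟩

lemma mob_irrational (g : SL(2,ℤ)) {x : ℝ} (hx : Irrational x) :
    Irrational (mob g x) := by
  rintro ⟨q, hq⟩
  have hden := denom_ne_zero g hx
  rw [mob, eq_comm, div_eq_iff hden] at hq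
  have hdetr : (g 0 0 : ℝ) * (g 1 1) - (g 0 1) * (g 1 0) = 1 := by
    exact_mod_cast det_entries g
  have e : ((g 0 0 : ℝ) - (q : ℝ) * (g 1 0)) * x + ((g 0 1 : ℝ) - (q : ℝ) * (g 1 1)) = 0 := by
    linear_combination hq
  rcases eq_or_ne ((g 0 0 : ℝ) - (q : ℝ) * (g 1 0 : ℝ)) 0 with h | h
  · rw [h, zero_mul, zero_add] at e
    have : (1 : ℝ) = 0 := by
      linear_combination -hdetr + (g 1 1 : ℝ) * h - (g 1 0 : ℝ) * e
    norm_num at this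
  · apply hx
    refine ⟨((q : ℚ) * (g 1 1 : ℚ) - (g 0 1 : ℚ)) / ((g 0 0 : ℚ) - (q : ℚ) * (g 1 0 : ℚ)), ?_⟩
    have h' : (((g 0 0 : ℚ) - (q : ℚ) * (g 1 0 : ℚ) : ℚ) : ℝ) ≠ 0 := by push_cast; exact h
    rw [Rat.cast_div, div_eq_iff h']
    push_cast
    linear_combination -e

lemma mob_one (x : ℝ) : mob 1 x = x := by simp [mob]

lemma mul_entry (g h : SL(2,ℤ)) (i j : Fin 2) :
    (g * h) i j = g i 0 * h 0 j + g i 1 * h 1 j := by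
  rw [Matrix.SpecialLinearGroup.coe_mul]
  rw [Matrix.mul_apply, Fin.sum_univ_two]

private lemma mobius_comp {a b c d p q r s x : ℝ} (hD : r*x+s ≠ 0)
    (hG : c*((p*x+q)/(r*x+s)) + d ≠ 0) :
    ((a*p+b*r)*x + (a*q+b*s)) / ((c*p+d*r)*x + (c*q+d*s))
      = (a*((p*x+q)/(r*x+s))+b) / (c*((p*x+q)/(r*x+s))+d) := by
  have hN : (c*p+d*r)*x + (c*q+d*s) ≠ 0 := by
    intro hc
    apply hG
    rw [mul_div_assoc', div_add' _ _ _ hD, div_eq_zero_iff]; left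
    linear_combination hc
  rw [div_eq_div_iff hN hG]
  field_simp
  ring

lemma mob_mul (g h : SL(2,ℤ)) {x : ℝ} (hx : Irrational x) :
    mob (g * h) x = mob g (mob h x) := by
  have hdh := denom_ne_zero h hx
  have hdg := denom_ne_zero g (mob_irrational h hx)
  rw [mob, mob, mob] at *
  rw [mul_entry, mul_entry, mul_entry, mul_entry]
  push_cast
  exact mobius_comp hdh hdg

abbrev PSL2 := SL(2,ℤ) ⧸ Subgroup.center SL(2,ℤ)
def Irr : Type := {x : ℝ // Irrational x}

noncomputable instance : MulAction SL(2,ℤ) Irr where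
  smul g x := ⟨mob g x.1, mob_irrational g x.2⟩
  one_smul x := Subtype.ext (mob_one x.1)
  mul_smul g h x := Subtype.ext (mob_mul g h x.2)

lemma smul_coe (g : SL(2,ℤ)) (x : Irr) : (g • x).1 = mob g x.1 := rfl

lemma center_smul (z : SL(2,ℤ)) (hz : z ∈ Subgroup.center SL(2,ℤ)) (x : Irr) :
    z • x = x := by
  obtain ⟨r, hr2, hr⟩ := Matrix.SpecialLinearGroup.mem_center_iff.mp hz
  have h00 : z 0 0 = r := by rw [← hr, Matrix.scalar_apply]; simp [Matrix.diagonal]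
  have h01 : z 0 1 = 0 := by rw [← hr, Matrix.scalar_apply]; simp [Matrix.diagonal]
  have h10 : z 1 0 = 0 := by rw [← hr, Matrix.scalar_apply]; simp [Matrix.diagonal]
  have h11 : z 1 1 = r := by rw [← hr, Matrix.scalar_apply]; simp [Matrix.diagonal]
  have hrne : (r : ℝ) ≠ 0 := by
    simp only [Fintype.card_fin] at hr2
    intro hc
    rw [show r = 0 by exact_mod_cast hc] at hr2
    norm_num at hr2
  apply Subtype.ext
  rw [smul_coe, mob, h00, h01, h10, h11]
  push_cast
  field_simp
  simp [hrne]

noncomputable def permHom : PSL2 →* Equiv.Perm Irr :=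
  QuotientGroup.lift _ (MulAction.toPermHom SL(2,ℤ) Irr) (by
    intro z hz
    simp only [MonoidHom.mem_ker]
    ext x
    simp [MulAction.toPermHom_apply, center_smul z hz])

noncomputable instance : MulAction PSL2 Irr := MulAction.compHom _ permHom

lemma psl_smul (g : SL(2,ℤ)) (x : Irr) :
    (QuotientGroup.mk g : PSL2) • x = g • x := rfl

lemma A_eq_T : A = ModularGroup.T := Subtype.ext rfl

lemma S'sq : S' * S' = -1 := by
  ext i j
  fin_cases i <;> fin_cases j <;>
    simp [Matrix.SpecialLinearGroup.coe_mul,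
      Matrix.SpecialLinearGroup.coe_neg] <;> simp [S', Matrix.mul_fin_two]

lemma Tpow_coe (n : ℤ) (g : SL(2,ℤ)) :
    ((ModularGroup.T ^ n * g : SL(2,ℤ)) : Matrix (Fin 2) (Fin 2) ℤ)
      = !![1,n;0,1] * (g : Matrix (Fin 2) (Fin 2) ℤ) := by
  rw [Matrix.SpecialLinearGroup.coe_mul, ModularGroup.coe_T_zpow]

lemma Tpow_00 (n : ℤ) (g : SL(2,ℤ)) :
    (ModularGroup.T ^ n * g) 0 0 = g 0 0 + n * g 1 0 := by
  have := congrFun (congrFun (Tpow_coe n g) 0) 0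
  rw [this, Matrix.mul_apply, Fin.sum_univ_two]
  simp

lemma Tpow_10 (n : ℤ) (g : SL(2,ℤ)) :
    (ModularGroup.T ^ n * g) 1 0 = g 1 0 := by
  have := ModularGroup.T_pow_mul_apply_one n g
  exact congrFun this 0

lemma natAbs_emod_lt (a : ℤ) {c : ℤ} (hc : c ≠ 0) :
    (a % c).natAbs < c.natAbs := by
  rcases lt_or_gt_of_ne hc with h | h
  · have h1 : 0 ≤ a % c := Int.emod_nonneg a hc
    have := Int.emod_neg a c
    have h2 : a % c < -c := by
      rw [← Int.emod_neg]
      exact Int.emod_lt_of_pos a (by omega)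
    omega
  · have h1 : 0 ≤ a % c := Int.emod_nonneg a hc
    have h2 : a % c < c := Int.emod_lt_of_pos a h
    omega

lemma mem_closure_AB (g : SL(2,ℤ)) : g ∈ Subgroup.closure {A, B} := by
  set Γ := Subgroup.closure {A, B} with hΓ
  have hA : A ∈ Γ := Subgroup.subset_closure (Set.mem_insert _ _)
  have hB : B ∈ Γ := Subgroup.subset_closure (Set.mem_insert_of_mem _ rfl)
  have hS : S' ∈ Γ := by
    rw [← hS']; exact Subgroup.mul_mem _ (Subgroup.mul_mem _ hA (Subgroup.inv_mem _ hB)) hA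
  have hT : ModularGroup.T ∈ Γ := A_eq_T ▸ hA
  have hneg : (-1 : SL(2,ℤ)) ∈ Γ := by rw [← S'sq]; exact Subgroup.mul_mem _ hS hS
  suffices H : ∀ n : ℕ, ∀ g : SL(2,ℤ), (g 1 0).natAbs = n → g ∈ Γ by
    exact H _ g rfl
  intro n
  induction n using Nat.strong_induction_on with
  | _ n IH =>
    intro g hg
    rcases eq_or_ne (g 1 0) 0 with hc | hc
    · -- c = 0
      have hdet := det_entries g
      rw [hc] at hdet
      simp only [mul_zero, sub_zero] at hdet
      rcases Int.mul_eq_one_iff_eq_one_or_neg_one.mp hdet with ⟨h1, h4⟩ | ⟨h1, h4⟩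
      · have he : g = ModularGroup.T ^ (g 0 1) := by
          ext i j
          rw [ModularGroup.coe_T_zpow]
          fin_cases i <;> fin_cases j <;> simp [h1, hc, h4]
        rw [he]
        exact Subgroup.zpow_mem _ hT _
      · have he : g = -1 * ModularGroup.T ^ (-(g 0 1)) := by
          ext i j
          rw [Matrix.SpecialLinearGroup.coe_mul, ModularGroup.coe_T_zpow]
          fin_cases i <;> fin_cases j <;>
            simp [Matrix.SpecialLinearGroup.coe_neg, h1, hc, h4]
        rw [he]
        exact Subgroup.mul_mem _ hneg (Subgroup.zpow_mem _ hT _)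
    · -- c ≠ 0
      set a := g 0 0
      set c := g 1 0
      set q := a / c
      have hg' : (S' * (ModularGroup.T ^ (-q) * g)) 1 0 = -(a % c) := by
        rw [mul_entry]
        have e1 : (ModularGroup.T ^ (-q) * g) 0 0 = a % c := by
          rw [Tpow_00, Int.emod_def]; ring
        have e2 : S' 1 0 = -1 := by simp [S']
        have e3 : S' 1 1 = 0 := by simp [S']
        rw [e1, e2, e3, Tpow_10]
        ring
      have hlt : ((S' * (ModularGroup.T ^ (-q) * g)) 1 0).natAbs < n := by
        rw [hg', ← hg]
        simpa using natAbs_emod_lt a hc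
      have hmem := IH _ hlt _ rfl
      have : g = ModularGroup.T ^ q * (S'⁻¹ * (S' * (ModularGroup.T ^ (-q) * g))) := by
        group
      rw [this]
      exact Subgroup.mul_mem _ (Subgroup.zpow_mem _ hT q)
        (Subgroup.mul_mem _ (Subgroup.inv_mem _ hS) hmem)

abbrev G := PresentedGroup modularRels

lemma neg_one_mem_center : (-1 : SL(2,ℤ)) ∈ Subgroup.center SL(2,ℤ) := by
  rw [Matrix.SpecialLinearGroup.mem_center_iff]
  refine ⟨-1, by norm_num, ?_⟩
  ext i j
  simp only [Matrix.SpecialLinearGroup.coe_neg, Matrix.scalar_apply,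
    Matrix.SpecialLinearGroup.coe_one, Matrix.diagonal, Matrix.neg_apply,
    Matrix.one_apply, Matrix.of_apply]
  split <;> simp

def fgen : Fin 2 → PSL2 := ![QuotientGroup.mk A, QuotientGroup.mk B⁻¹]

lemma fgen_rels : ∀ r ∈ modularRels, FreeGroup.lift fgen r = 1 := by
  intro r hr
  rcases hr with h | h
  · subst h
    simp only [_root_.map_mul, _root_.map_inv, FreeGroup.lift_apply_of, fgen]
    simp only [Matrix.cons_val_zero, Matrix.cons_val_one, Matrix.head_cons]
    rw [mul_inv_eq_one]
    have := congrArg (QuotientGroup.mk' (Subgroup.center SL(2,ℤ))) braid_rel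
    simpa [_root_.map_mul] using this
  · rw [Set.mem_singleton_iff] at h
    subst h
    simp only [_root_.map_pow, _root_.map_mul, FreeGroup.lift_apply_of, fgen]
    simp only [Matrix.cons_val_zero, Matrix.cons_val_one, Matrix.head_cons]
    have : (QuotientGroup.mk A * QuotientGroup.mk B⁻¹ : PSL2)
        = QuotientGroup.mk U := by
      rw [← hU]; rfl
    rw [this]
    have : ((QuotientGroup.mk U : PSL2)) ^ 3 = QuotientGroup.mk (U ^ 3) := by rfl
    rw [this, hU3]
    exact (QuotientGroup.eq_one_iff _).mpr neg_one_mem_center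

def φ : G →* PSL2 := PresentedGroup.toGroup fgen_rels

lemma φ_of0 : φ (PresentedGroup.of 0) = QuotientGroup.mk A := by
  rw [φ, PresentedGroup.toGroup.of]; rfl
lemma φ_of1 : φ (PresentedGroup.of 1) = QuotientGroup.mk B⁻¹ := by
  rw [φ, PresentedGroup.toGroup.of]; rfl

-- relations inside G
def σg : G := PresentedGroup.of 0 * PresentedGroup.of 1 * PresentedGroup.of 0
def τg : G := PresentedGroup.of 0 * PresentedGroup.of 1

lemma rel1 : σg = PresentedGroup.of 1 * PresentedGroup.of 0 * PresentedGroup.of 1 := by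
  have h : (PresentedGroup.mk modularRels) (FreeGroup.of 0 * FreeGroup.of 1 * FreeGroup.of 0 *
      (FreeGroup.of 1 * FreeGroup.of 0 * FreeGroup.of 1)⁻¹) = 1 := by
    apply (QuotientGroup.eq_one_iff _).mpr
    exact Subgroup.subset_normalClosure (Set.mem_insert _ _)
  rw [_root_.map_mul, _root_.map_inv, mul_inv_eq_one] at h
  simpa [_root_.map_mul, PresentedGroup.of, σg] using h

lemma rel2 : τg ^ 3 = 1 := by
  have h : (PresentedGroup.mk modularRels) ((FreeGroup.of 0 * FreeGroup.of 1) ^ 3) = 1 := by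
    apply (QuotientGroup.eq_one_iff _).mpr
    exact Subgroup.subset_normalClosure (Set.mem_insert_of_mem _ rfl)
  simpa [_root_.map_pow, _root_.map_mul, PresentedGroup.of, τg] using h

lemma rel_s : σg ^ 2 = 1 := by
  have : σg ^ 2 = τg ^ 3 := by
    rw [pow_two]
    nth_rewrite 2 [rel1]
    rw [show τg ^ 3 = τg * τg * τg by rw [pow_succ, pow_two]]
    simp only [σg, τg]
    group
  rw [this, rel2]

open Monoid in
noncomputable section

def cyclicHom (n : ℕ) {M : Type*} [Group M] (u : M) (h : u ^ n = 1) :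
    Multiplicative (ZMod n) →* M :=
  AddMonoidHom.toMultiplicativeLeft
    (ZMod.lift n ⟨zmultiplesHom (Additive M) (Additive.ofMul u), by
      simpa [← ofMul_zpow] using congrArg Additive.ofMul
        (by rw [zpow_natCast, h] : u ^ (n : ℤ) = 1)⟩)

lemma cyclicHom_one (n : ℕ) {M : Type*} [Group M] (u : M) (h : u ^ n = 1) :
    cyclicHom n u h (Multiplicative.ofAdd 1) = u := by
  have h1 : ((1 : ℤ) : ZMod n) = (1 : ZMod n) := by push_cast; rfl
  simp only [cyclicHom, AddMonoidHom.toMultiplicativeLeft]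
  simp only [Equiv.coe_fn_mk, MonoidHom.coe_mk, OneHom.coe_mk]
  change Additive.toMul (ZMod.lift n _ (Multiplicative.toAdd (Multiplicative.ofAdd (1 : ZMod n)))) = u
  have : (Multiplicative.ofAdd (1 : ZMod n)).toAdd = ((1 : ℤ) : ZMod n) := by
    rw [h1]; rfl
  rw [this, ZMod.lift_coe]
  simp

abbrev Hfam (i : Fin 2) : Type := Multiplicative (ZMod (![2,3] i))

def gG : ∀ i : Fin 2, Hfam i →* G := fun i =>
  match i with
  | 0 => cyclicHom 2 σg rel_s
  | 1 => cyclicHom 3 τg rel2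

def ψ : CoprodI Hfam →* G := CoprodI.lift gG

lemma ψ_surj : Function.Surjective ψ := by
  have hσ : σg ∈ ψ.range := ⟨CoprodI.of (i := 0) (Multiplicative.ofAdd 1), by
    rw [ψ, CoprodI.lift_of]
    exact cyclicHom_one 2 σg rel_s⟩
  have hτ : τg ∈ ψ.range := ⟨CoprodI.of (i := 1) (Multiplicative.ofAdd 1), by
    rw [ψ, CoprodI.lift_of]
    exact cyclicHom_one 3 τg rel2⟩
  intro x
  suffices hx : x ∈ ψ.range by exact hx
  apply PresentedGroup.generated_by
  intro j
  fin_cases j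
  · show (PresentedGroup.of (0 : Fin 2) : G) ∈ ψ.range
    have : (PresentedGroup.of 0 : G) = τg⁻¹ * σg := by
      simp only [σg, τg]; group
    rw [this]
    exact Subgroup.mul_mem _ (Subgroup.inv_mem _ hτ) hσ
  · show (PresentedGroup.of (1 : Fin 2) : G) ∈ ψ.range
    have : (PresentedGroup.of 1 : G) = σg⁻¹ * (τg * τg) := by
      simp only [σg, τg]; group
    rw [this]
    exact Subgroup.mul_mem _ (Subgroup.inv_mem _ hσ)
      (Subgroup.mul_mem _ hτ hτ)

end

open Monoid in
noncomputable section

def fP : ∀ i : Fin 2, Hfam i →* PSL2 := fun i => φ.comp (gG i)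

lemma comp_eq : φ.comp ψ = CoprodI.lift fP := by
  apply CoprodI.ext_hom
  intro i
  ext h
  simp [ψ, CoprodI.lift_of, fP]

lemma φσ : φ σg = QuotientGroup.mk S' := by
  rw [σg, _root_.map_mul, _root_.map_mul, φ_of0, φ_of1, ← hS']
  rfl

lemma φτ : φ τg = QuotientGroup.mk U := by
  rw [τg, _root_.map_mul, φ_of0, φ_of1, ← hU]
  rfl

def V : SL(2,ℤ) := ⟨!![-1,1;-1,0], by norm_num [Matrix.det_fin_two_of]⟩

lemma UU : U * U = V := by
  ext i j
  fin_cases i <;> fin_cases j <;>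
    simp [Matrix.SpecialLinearGroup.coe_mul] <;> simp [U, V, Matrix.mul_fin_two]

lemma mob_S' (x : ℝ) : mob S' x = 1 / (-x) := by
  have e00 : (S' 0 0 : ℤ) = 0 := rfl
  have e01 : (S' 0 1 : ℤ) = 1 := rfl
  have e10 : (S' 1 0 : ℤ) = -1 := rfl
  have e11 : (S' 1 1 : ℤ) = 0 := rfl
  rw [mob, e00, e01, e10, e11]
  push_cast
  ring_nf

lemma mob_U (x : ℝ) : mob U x = 1 / (1 - x) := by
  have e00 : (U 0 0 : ℤ) = 0 := rfl
  have e01 : (U 0 1 : ℤ) = 1 := rfl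
  have e10 : (U 1 0 : ℤ) = -1 := rfl
  have e11 : (U 1 1 : ℤ) = 1 := rfl
  rw [mob, e00, e01, e10, e11]
  push_cast
  ring_nf

lemma mob_UU (x : ℝ) : mob (U * U) x = (1 - x) / (-x) := by
  rw [UU]
  have e00 : (V 0 0 : ℤ) = -1 := rfl
  have e01 : (V 0 1 : ℤ) = 1 := rfl
  have e10 : (V 1 0 : ℤ) = -1 := rfl
  have e11 : (V 1 1 : ℤ) = 0 := rfl
  rw [mob, e00, e01, e10, e11]
  push_cast
  ring_nf

def Xs : Fin 2 → Set Irr := ![{x | x.1 < 0}, {x | 0 < x.1}]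

instance : Fintype (Hfam 0) := inferInstanceAs (Fintype (Multiplicative (ZMod 2)))
instance : Fintype (Hfam 1) := inferInstanceAs (Fintype (Multiplicative (ZMod 3)))
instance : DecidableEq (Hfam 0) := inferInstanceAs (DecidableEq (Multiplicative (ZMod 2)))
instance : DecidableEq (Hfam 1) := inferInstanceAs (DecidableEq (Multiplicative (ZMod 3)))

lemma zmod2_cases : ∀ h : Hfam 0, h ≠ 1 → h = Multiplicative.ofAdd 1 := by
  decide

lemma zmod3_cases : ∀ h : Hfam 1, h ≠ 1 →
    h = Multiplicative.ofAdd 1 ∨ h = Multiplicative.ofAdd 2 := by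
  decide

lemma fP0 : fP 0 (Multiplicative.ofAdd 1) = QuotientGroup.mk S' := by
  rw [fP, MonoidHom.comp_apply]
  rw [show gG 0 (Multiplicative.ofAdd 1) = σg from cyclicHom_one 2 σg rel_s, φσ]

lemma fP1 : fP 1 (Multiplicative.ofAdd 1) = QuotientGroup.mk U := by
  rw [fP, MonoidHom.comp_apply]
  rw [show gG 1 (Multiplicative.ofAdd 1) = τg from cyclicHom_one 3 τg rel2, φτ]

lemma fP2 : fP 1 (Multiplicative.ofAdd 2) = QuotientGroup.mk (U * U) := by
  have h2 : (Multiplicative.ofAdd 2 : Hfam 1) =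
      Multiplicative.ofAdd 1 * Multiplicative.ofAdd 1 := by decide
  rw [h2, _root_.map_mul, fP1]
  rfl

end

open Monoid in
noncomputable section

lemma hXnonempty : ∀ i, (Xs i).Nonempty := by
  intro i
  fin_cases i
  · exact ⟨⟨-Real.sqrt 2, irrational_sqrt_two.neg⟩, by
      show -Real.sqrt 2 < 0
      have := Real.sqrt_pos.mpr (show (0:ℝ) < 2 by norm_num)
      linarith⟩
  · exact ⟨⟨Real.sqrt 2, irrational_sqrt_two⟩, by
      show 0 < Real.sqrt 2
      exact Real.sqrt_pos.mpr (by norm_num)⟩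

lemma d01 : Disjoint (Xs 0) (Xs 1) := by
  rw [Set.disjoint_left]
  intro x h1 h2
  exact absurd (show (0:ℝ) < x.1 from h2) (not_lt.mpr (le_of_lt (show x.1 < 0 from h1)))

lemma hXdisj : Pairwise (Function.onFun Disjoint Xs) := by
  intro i j hij
  fin_cases i <;> fin_cases j
  · exact absurd rfl hij
  · exact d01
  · exact d01.symm
  · exact absurd rfl hij

open Pointwise in
lemma k01 : ∀ h : Hfam 0, h ≠ 1 → fP 0 h • Xs 1 ⊆ Xs 0 := by
  intro h hne
  rw [zmod2_cases h hne, fP0]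
  rintro x ⟨y, hy, rfl⟩
  have hy' : 0 < y.1 := hy
  show ((QuotientGroup.mk S' : PSL2) • y).1 < 0
  rw [psl_smul, smul_coe, mob_S', one_div_neg]
  linarith

open Pointwise in
lemma k10 : ∀ h : Hfam 1, h ≠ 1 → fP 1 h • Xs 0 ⊆ Xs 1 := by
  intro h hne
  rcases zmod3_cases h hne with h1 | h1
  · rw [h1, fP1]
    rintro x ⟨y, hy, rfl⟩
    have hy' : y.1 < 0 := hy
    show 0 < ((QuotientGroup.mk U : PSL2) • y).1
    rw [psl_smul, smul_coe, mob_U, one_div_pos]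
    linarith
  · rw [h1, fP2]
    rintro x ⟨y, hy, rfl⟩
    have hy' : y.1 < 0 := hy
    show 0 < ((QuotientGroup.mk (U * U) : PSL2) • y).1
    rw [psl_smul, smul_coe, mob_UU]
    apply div_pos <;> linarith

open Pointwise in
lemma hpp : Pairwise fun i j => ∀ h : Hfam i, h ≠ 1 → fP i h • Xs j ⊆ Xs i := by
  intro i j hij
  fin_cases i <;> fin_cases j
  · exact absurd rfl hij
  · exact k01
  · exact k10
  · exact absurd rfl hij

lemma hcard : 3 ≤ Cardinal.mk (Fin 2) ∨ ∃ i, 3 ≤ Cardinal.mk (Hfam i) := by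
  right
  refine ⟨1, ?_⟩
  have he : Hfam 1 = Multiplicative (ZMod 3) := rfl
  rw [he, Cardinal.mk_fintype]
  norm_num

lemma liftfP_inj : Function.Injective (CoprodI.lift fP) :=
  CoprodI.lift_injective_of_ping_pong fP hcard Xs hXnonempty hXdisj hpp

lemma φ_inj : Function.Injective φ := by
  have hinj : Function.Injective (φ.comp ψ) := by
    rw [comp_eq]; exact liftfP_inj
  intro a b hab
  obtain ⟨wa, rfl⟩ := ψ_surj a
  obtain ⟨wb, rfl⟩ := ψ_surj b
  exact congrArg ψ (hinj (by simpa using hab))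

lemma φ_surj : Function.Surjective φ := by
  intro q
  obtain ⟨m, rfl⟩ := QuotientGroup.mk_surjective q
  have hm := mem_closure_AB m
  induction hm using Subgroup.closure_induction with
  | mem x hx =>
    rcases hx with h | h
    · exact ⟨PresentedGroup.of 0, by rw [φ_of0, h]⟩
    · exact ⟨(PresentedGroup.of 1)⁻¹, by
        rw [_root_.map_inv, φ_of1, h]
        show (QuotientGroup.mk B⁻¹ : PSL2)⁻¹ = _
        rw [← QuotientGroup.mk_inv, inv_inv]⟩
  | one => exact ⟨1, by rw [_root_.map_one]; rfl⟩
  | mul x y _ _ hx hy =>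
    obtain ⟨a, ha⟩ := hx
    obtain ⟨b, hb⟩ := hy
    exact ⟨a * b, by rw [_root_.map_mul, ha, hb]; rfl⟩
  | inv x _ hx =>
    obtain ⟨a, ha⟩ := hx
    exact ⟨a⁻¹, by rw [_root_.map_inv, ha, ← QuotientGroup.mk_inv]⟩

end

/-- The quotient of B₃ = ⟨x, y | x·y·x = y·x·y⟩ by the relation (x·y)³ = 1 is
isomorphic to PSL(2,ℤ) = SL(2,ℤ) ⧸ center, via x ↦ [A], y ↦ [B⁻¹]. -/
theorem braid_quotient_iso_PSL2 :
    ∃ e : PresentedGroup modularRels ≃* SL(2,ℤ) ⧸ Subgroup.center SL(2,ℤ),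
      e (PresentedGroup.of 0) = (QuotientGroup.mk A) ∧
      e (PresentedGroup.of 1) = (QuotientGroup.mk B⁻¹) := by
  exact ⟨MulEquiv.ofBijective φ ⟨φ_inj, φ_surj⟩, φ_of0, φ_of1⟩
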